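/- arXiv:math/0004091 — 3 statements merged into one kernel-verified Lean document; each statement's English description precedes it below -/
import Mathlib

section
/- There exists a metric d on the real line ℝ that induces the standard topology of ℝ and is such that every finite metric space admits an isometric embedding into (ℝ, d). -/
noncomputable section UnivMetricConstruction

open Metric Set Finset



/-- clamp to [0,1] -/
def clamp01 (x : ℝ) : ℝ := max 0 (min 1 x)

lemma clamp01_nonneg (x : ℝ) : 0 ≤ clamp01 x := le_max_left _ _

lemma clamp01_le_one (x : ℝ) : clamp01 x ≤ 1 :=
  max_le zero_le_one (min_le_left _ _)

lemma clamp01_mono : Monotone clamp01 := fun a b hab =>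
  max_le_max le_rfl (min_le_min le_rfl hab)

lemma clamp01_continuous : Continuous clamp01 :=
  continuous_const.max (continuous_const.min continuous_id)

lemma clamp01_of_nonpos {x : ℝ} (h : x ≤ 0) : clamp01 x = 0 := by
  unfold clamp01
  rw [min_eq_right (h.trans zero_le_one), max_eq_left h]

lemma clamp01_of_one_le {x : ℝ} (h : 1 ≤ x) : clamp01 x = 1 := by
  unfold clamp01
  rw [min_eq_left h, max_eq_right zero_le_one]

lemma clamp01_of_mem {x : ℝ} (h0 : 0 ≤ x) (h1 : x ≤ 1) : clamp01 x = x := by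
  unfold clamp01
  rw [min_eq_right h1, max_eq_right h0]

/-- the set of even integers in ℝ -/
def evens : Set ℝ := Set.range (fun k : ℤ => (2 * k : ℝ))

lemma evens_nonempty : evens.Nonempty := ⟨0, ⟨0, by norm_num⟩⟩

/-- the basic even-periodic tent-plateau function -/
def pfun (t : ℝ) : ℝ := clamp01 (3 * Metric.infDist t evens - 1)

lemma pfun_nonneg (t : ℝ) : 0 ≤ pfun t := clamp01_nonneg _

lemma pfun_le_one (t : ℝ) : pfun t ≤ 1 := clamp01_le_one _

lemma pfun_continuous : Continuous pfun := by
  apply clamp01_continuous.comp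
  exact (continuous_const.mul (continuous_infDist_pt evens)).sub continuous_const

lemma pfun_eq_zero {A : ℕ} {u : ℝ} (h0 : 0 ≤ u) (h1 : u ≤ 1/3) :
    pfun (2 * A + u) = 0 := by
  have hmem : (2 * (A : ℝ)) ∈ evens := ⟨(A : ℤ), by push_cast; ring⟩
  have h2 := Metric.infDist_le_dist_of_mem (x := (2 * (A:ℝ) + u)) hmem
  rw [Real.dist_eq, show 2 * (A:ℝ) + u - 2 * A = u by ring, abs_of_nonneg h0] at h2
  exact clamp01_of_nonpos (by linarith)

lemma pfun_eq_one {A : ℕ} {u : ℝ} (h0 : 2/3 ≤ u) (h1 : u ≤ 1) :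
    pfun (2 * A + u) = 1 := by
  have hge : (2:ℝ)/3 ≤ Metric.infDist (2 * A + u) evens := by
    by_contra hlt
    push_neg at hlt
    obtain ⟨y, ⟨k, rfl⟩, hy⟩ := (Metric.infDist_lt_iff evens_nonempty).1 hlt
    rw [Real.dist_eq] at hy
    rcases le_or_gt k (A : ℤ) with hk | hk
    · have hk' : (k : ℝ) ≤ (A : ℝ) := by exact_mod_cast hk
      have : 2 * (A:ℝ) + u - 2 * k ≥ 2/3 := by linarith
      have := le_abs_self (2 * (A:ℝ) + u - 2 * k)
      linarith [le_abs_self (2 * (A:ℝ) + u - 2 * k), hy]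
    · have hk' : (A : ℝ) + 1 ≤ (k : ℝ) := by exact_mod_cast hk
      have h3 : 2 * (A:ℝ) + u - 2 * k ≤ -1 := by linarith
      have := neg_abs_le (2 * (A:ℝ) + u - 2 * k)
      linarith
  exact clamp01_of_one_le (by linarith)



/-- numeric value of a boolean digit -/
def bval (b : Bool) : ℝ := bif b then 1 else 0

lemma bval_nonneg (b : Bool) : 0 ≤ bval b := by cases b <;> simp [bval]
lemma bval_le_one (b : Bool) : bval b ≤ 1 := by cases b <;> simp [bval]

lemma half_pow (k : ℕ) : ((1:ℝ)/2) ^ k = 1 / 2 ^ k := by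
  rw [div_pow, one_pow]

/-- a convenient summability criterion -/
lemma summable_of_le_half_pow {f : ℕ → ℝ} (h0 : ∀ k, 0 ≤ f k)
    (h1 : ∀ k, f k ≤ (1/2) ^ k) : Summable f :=
  Summable.of_nonneg_of_le h0 h1
    (summable_geometric_of_lt_one (by norm_num) (by norm_num))

/-- remainders in the greedy binary expansion -/
def brem (a : ℝ) : ℕ → ℝ
  | 0 => a
  | k + 1 => if 1 / 2 ^ (k + 1) ≤ brem a k then brem a k - 1 / 2 ^ (k + 1) else brem a k

/-- greedy binary digits -/
def bdig (a : ℝ) (k : ℕ) : Bool := decide (1 / 2 ^ (k + 1) ≤ brem a k)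

lemma brem_mem {a : ℝ} (ha : a ∈ Icc (0:ℝ) 1) (k : ℕ) :
    brem a k ∈ Icc (0:ℝ) (1 / 2 ^ k) := by
  induction k with
  | zero => simpa [brem] using ha
  | succ k ih =>
    rw [brem]
    split_ifs with h
    · constructor
      · linarith [ih.1]
      · have : (1:ℝ)/2^(k+1) + 1/2^(k+1) = 1/2^k := by
          rw [pow_succ]; ring
        linarith [ih.2]
    · push_neg at h
      exact ⟨ih.1, h.le⟩

lemma brem_partial (a : ℝ) (k : ℕ) :
    ∑ i ∈ Finset.range k, bval (bdig a i) / 2 ^ (i + 1) = a - brem a k := by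
  induction k with
  | zero => simp [brem]
  | succ k ih =>
    rw [Finset.sum_range_succ, ih, bdig, brem]
    by_cases h : 1 / 2 ^ (k + 1) ≤ brem a k
    · rw [if_pos h, decide_eq_true h]
      simp only [bval, cond_true]
      ring
    · rw [if_neg h, decide_eq_false h]
      simp only [bval, cond_false]
      ring

lemma summable_bdig (c : ℕ → Bool) : Summable (fun k => bval (c k) / 2 ^ (k + 1)) := by
  apply summable_of_le_half_pow (fun k => div_nonneg (bval_nonneg _) (by positivity)) (fun k => ?_)
  rw [half_pow]
  calc bval (c k) / 2 ^ (k+1) ≤ 1 / 2^(k+1) :=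
        div_le_div_of_nonneg_right (bval_le_one _) (by positivity) |>.trans_eq rfl
    _ ≤ 1 / 2^k := by
        apply div_le_div_of_nonneg_left one_pos.le (by positivity)
        apply pow_le_pow_right₀ (by norm_num)
        omega

lemma binary_expansion {a : ℝ} (ha : a ∈ Icc (0:ℝ) 1) :
    HasSum (fun k => bval (bdig a k) / 2 ^ (k + 1)) a := by
  have hsumm : Summable (fun k => bval (bdig a k) / 2 ^ (k + 1)) := summable_bdig _
  have hlim : Filter.Tendsto (fun k => ∑ i ∈ Finset.range k, bval (bdig a i) / 2 ^ (i + 1))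
      Filter.atTop (nhds a) := by
    simp only [brem_partial]
    have h0 : Filter.Tendsto (fun k => brem a k) Filter.atTop (nhds 0) := by
      apply squeeze_zero (fun k => (brem_mem ha k).1)
        (fun k => (brem_mem ha k).2.trans_eq (half_pow k).symm)
      exact tendsto_pow_atTop_nhds_zero_of_lt_one (by norm_num) (by norm_num)
    simpa using (tendsto_const_nhds (x := a)).sub h0
  have h2 := hsumm.hasSum
  rwa [tendsto_nhds_unique hsumm.hasSum.tendsto_sum_nat hlim] at h2


/-- ternary encoding of a digit sequence -/
def cF (c : ℕ → Bool) : ℝ := ∑' i, 2 * bval (c i) / 3 ^ (i + 1)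

lemma summable_cF (c : ℕ → Bool) : Summable (fun i => 2 * bval (c i) / 3 ^ (i + 1)) := by
  apply Summable.of_nonneg_of_le
    (fun i => by
      apply div_nonneg _ (by positivity)
      have := bval_nonneg (c i); linarith)
    (fun i => ?_)
    ((summable_geometric_of_lt_one (by norm_num : (0:ℝ) ≤ 1/3) (by norm_num)).mul_left (2/3))
  have h1 : 2 * bval (c i) / 3 ^ (i+1) ≤ 2 / 3^(i+1) := by
    apply div_le_div_of_nonneg_right _ (by positivity)
    have := bval_le_one (c i); linarith
  refine h1.trans (le_of_eq ?_)
  rw [pow_succ, div_pow, one_pow]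
  field_simp

lemma cF_nonneg (c : ℕ → Bool) : 0 ≤ cF c :=
  tsum_nonneg (fun i => by
    apply div_nonneg _ (by positivity)
    have := bval_nonneg (c i); linarith)

lemma tsum_two_thirds_pow : ∑' i : ℕ, 2 / 3 ^ (i + 2) = (1:ℝ)/3 := by
  have h : ∀ i : ℕ, 2 / 3 ^ (i + 2) = (2/9) * (1/3:ℝ)^i := by
    intro i
    rw [div_pow, one_pow, pow_add]
    field_simp
    ring
  rw [tsum_congr h, tsum_mul_left, tsum_geometric_of_lt_one (by norm_num) (by norm_num)]
  norm_num

lemma cF_le_one (c : ℕ → Bool) : cF c ≤ 1 := by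
  have h2 : ∑' i : ℕ, 2 / 3 ^ (i + 1) = (1:ℝ) := by
    have h : ∀ i : ℕ, 2 / 3 ^ (i + 1) = (2/3) * (1/3:ℝ)^i := by
      intro i
      rw [div_pow, one_pow, pow_add]
      field_simp
    rw [tsum_congr h, tsum_mul_left, tsum_geometric_of_lt_one (by norm_num) (by norm_num)]
    norm_num
  rw [← h2]
  apply Summable.tsum_le_tsum _ (summable_cF c)
  · apply Summable.of_nonneg_of_le (fun i => by positivity) (fun i => le_of_eq ?_)
      ((summable_geometric_of_lt_one (by norm_num : (0:ℝ) ≤ 1/3) (by norm_num)).mul_left (2/3))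
    rw [div_pow, one_pow, pow_succ]
    field_simp
  · intro i
    apply div_le_div_of_nonneg_right _ (by positivity)
    have := bval_le_one (c i); linarith

/-- the key digit-extraction property -/
lemma pfun_cF (c : ℕ → Bool) (e : ℕ) : pfun (3 ^ e * cF c) = bval (c e) := by
  classical
  set f : ℕ → ℝ := fun i => 2 * bval (c i) / 3 ^ (i + 1) with hf
  have hsumm : Summable f := summable_cF c
  have hF : Summable (fun i => 3 ^ e * f i) := hsumm.mul_left _
  have hsplit := Summable.sum_add_tsum_nat_add (f := fun i => 3 ^ e * f i) (e + 1) hF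
  have hmul : 3 ^ e * cF c = ∑' i, 3 ^ e * f i := by
    rw [cF, ← tsum_mul_left]
  -- the integer part
  set An : ℕ := ∑ i ∈ Finset.range e, (bif c i then 1 else 0) * 3 ^ (e - 1 - i) with hAn
  have hfin : ∑ i ∈ Finset.range (e+1), 3 ^ e * f i = 2 * An + 2 * bval (c e) / 3 := by
    rw [Finset.sum_range_succ]
    have h1 : (3:ℝ) ^ e * f e = 2 * bval (c e) / 3 := by
      rw [hf]
      simp only []
      rw [pow_succ]
      field_simp
    have h2 : ∑ i ∈ Finset.range e, 3 ^ e * f i = 2 * An := by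
      rw [hAn]
      push_cast
      rw [Finset.mul_sum]
      apply Finset.sum_congr rfl
      intro i hi
      have hie : i < e := Finset.mem_range.1 hi
      have hpow : (3:ℝ) ^ e = 3 ^ (i + 1) * 3 ^ (e - 1 - i) := by
        rw [← pow_add]
        congr 1
        omega
      rw [hf]
      simp only []
      rw [hpow]
      have h4 : (3:ℝ) ^ (i+1) ≠ 0 := by positivity
      cases c i <;> simp [bval] <;> field_simp <;> ring
    rw [h1, h2]
  -- the tail
  set r : ℝ := ∑' i, 3 ^ e * f (i + (e + 1)) with hr
  have htail_eq : ∀ i : ℕ, 3 ^ e * f (i + (e + 1)) = 2 * bval (c (i + e + 1)) / 3 ^ (i + 2) := by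
    intro i
    rw [hf]
    simp only []
    have hpow : (3:ℝ) ^ (i + (e+1) + 1) = 3 ^ e * 3 ^ (i + 2) := by
      rw [← pow_add]; congr 1; omega
    rw [hpow]
    have : (3:ℝ) ^ (i+2) ≠ 0 := by positivity
    have : (3:ℝ) ^ e ≠ 0 := by positivity
    rw [show i + (e + 1) = i + e + 1 by omega]
    field_simp
  have hrsumm : Summable (fun i => 3 ^ e * f (i + (e + 1))) := by
    exact (summable_nat_add_iff (e+1)).2 hsumm |>.mul_left _
  have hr0 : 0 ≤ r := by
    apply tsum_nonneg
    intro i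
    rw [htail_eq i]
    apply div_nonneg _ (by positivity)
    have := bval_nonneg (c (i + e + 1)); linarith
  have hr13 : r ≤ 1/3 := by
    rw [hr, ← tsum_two_thirds_pow]
    apply Summable.tsum_le_tsum _ hrsumm
    · apply Summable.of_nonneg_of_le (fun i => by positivity) (fun i => le_of_eq ?_)
        ((summable_geometric_of_lt_one (by norm_num : (0:ℝ) ≤ 1/3) (by norm_num)).mul_left (2/9))
      rw [div_pow, one_pow, pow_add]
      field_simp; ring
    · intro i
      rw [htail_eq i]
      apply div_le_div_of_nonneg_right _ (by positivity)
      have := bval_le_one (c (i + e + 1)); linarith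
  -- put it together
  have hval : 3 ^ e * cF c = 2 * An + (2 * bval (c e) / 3 + r) := by
    rw [hmul, ← hsplit, hfin]
    ring
  rw [hval]
  cases hce : c e with
  | false =>
    have hb : bval false = 0 := by simp [bval]
    rw [hb]
    apply pfun_eq_zero (by linarith) (by linarith)
  | true =>
    have hb : bval true = 1 := by simp [bval]
    rw [hb]
    apply pfun_eq_one (by linarith) (by linarith)


/-- Schoenberg-type coordinate curve -/
def xcurve (t : ℝ) : ℝ := ∑' k : ℕ, pfun (3 ^ (2 * k) * t) / 2 ^ (k + 1)

lemma summable_half_succ : Summable (fun k : ℕ => ((1:ℝ)/2) ^ (k + 1)) := by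
  simp only [pow_succ]
  exact (summable_geometric_of_lt_one (by norm_num) (by norm_num)).mul_right _

lemma tsum_half_succ : ∑' k : ℕ, ((1:ℝ)/2) ^ (k + 1) = 1 := by
  simp only [pow_succ]
  rw [tsum_mul_right, tsum_geometric_of_lt_one (by norm_num) (by norm_num)]
  norm_num

lemma summable_xcurve (t : ℝ) : Summable (fun k : ℕ => pfun (3 ^ (2 * k) * t) / 2 ^ (k + 1)) := by
  apply Summable.of_nonneg_of_le
    (fun k => div_nonneg (pfun_nonneg _) (by positivity))
    (fun k => ?_) summable_half_succ
  rw [half_pow]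
  exact div_le_div_of_nonneg_right (pfun_le_one _) (by positivity) |>.trans le_rfl

lemma xcurve_continuous : Continuous xcurve := by
  unfold xcurve
  apply continuous_tsum (f := fun k t => pfun (3 ^ (2*k) * t) / 2 ^ (k+1)) ?_ summable_half_succ ?_
  · intro k
    exact (pfun_continuous.comp (continuous_const.mul continuous_id)).div_const _
  intro k t
  rw [half_pow, Real.norm_eq_abs, abs_of_nonneg (div_nonneg (pfun_nonneg _) (by positivity))]
  exact div_le_div_of_nonneg_right (pfun_le_one _) (by positivity)

lemma xcurve_nonneg (t : ℝ) : 0 ≤ xcurve t :=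
  tsum_nonneg (fun k => div_nonneg (pfun_nonneg _) (by positivity))

lemma xcurve_le_one (t : ℝ) : xcurve t ≤ 1 := by
  rw [← tsum_half_succ]
  apply Summable.tsum_le_tsum _ (summable_xcurve t) summable_half_succ
  intro k
  rw [half_pow]
  exact div_le_div_of_nonneg_right (pfun_le_one _) (by positivity)

lemma xcurve_cF (c : ℕ → Bool) (e : ℕ) :
    xcurve (3 ^ e * cF c) = ∑' k : ℕ, bval (c (2 * k + e)) / 2 ^ (k + 1) := by
  apply tsum_congr
  intro k
  rw [← mul_assoc, ← pow_add, pfun_cF]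

/-- the iterated space-filling curve -/
def sfill : (q : ℕ) → ℝ → Fin q → ℝ
  | 0, _ => Fin.elim0
  | q + 1, t => Fin.cons (xcurve t) (sfill q (xcurve (3 * t)))

lemma sfill_mem : ∀ (q : ℕ) (t : ℝ) (j : Fin q), sfill q t j ∈ Icc (0:ℝ) 1 := by
  intro q
  induction q with
  | zero => exact fun t j => j.elim0
  | succ q ih =>
    intro t j
    refine Fin.cases ?_ ?_ j
    · simpa [sfill] using ⟨xcurve_nonneg t, xcurve_le_one t⟩
    · intro i
      simpa [sfill] using ih _ i

lemma sfill_continuous : ∀ (q : ℕ) (j : Fin q), Continuous fun t => sfill q t j := by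
  intro q
  induction q with
  | zero => exact fun j => j.elim0
  | succ q ih =>
    intro j
    refine Fin.cases ?_ ?_ j
    · simpa [sfill] using xcurve_continuous
    · intro i
      simp only [sfill, Fin.cons_succ]
      exact (ih i).comp (xcurve_continuous.comp (continuous_const.mul continuous_id))

lemma sfill_surj : ∀ (q : ℕ) (v : Fin q → ℝ), (∀ j, v j ∈ Icc (0:ℝ) 1) →
    ∃ t ∈ Icc (0:ℝ) 1, sfill q t = v := by
  intro q
  induction q with
  | zero =>
    intro v _
    exact ⟨0, ⟨le_rfl, zero_le_one⟩, funext fun j => j.elim0⟩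
  | succ q ih =>
    intro v hv
    obtain ⟨s, hs, hsf⟩ := ih (Fin.tail v) (fun j => hv j.succ)
    set α := bdig (v 0) with hα
    set β := bdig s with hβ
    have hαsum := binary_expansion (hv 0)
    have hβsum := binary_expansion hs
    set c : ℕ → Bool := fun i => if i % 2 = 0 then α (i / 2) else β (i / 2) with hc
    have hc0 : ∀ k, c (2 * k + 0) = α k := by
      intro k
      have h1 : (2 * k + 0) % 2 = 0 := by omega
      have h2 : (2 * k + 0) / 2 = k := by omega
      simp [hc, h1, h2]
    have hc1 : ∀ k, c (2 * k + 1) = β k := by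
      intro k
      have h1 : (2 * k + 1) % 2 = 1 := by omega
      have h2 : (2 * k + 1) / 2 = k := by omega
      simp [hc, h1, h2]
    refine ⟨cF c, ⟨cF_nonneg c, cF_le_one c⟩, ?_⟩
    have hx0 : xcurve (cF c) = v 0 := by
      have h := xcurve_cF c 0
      rw [pow_zero, one_mul] at h
      rw [h, tsum_congr (fun k => by rw [hc0 k])]
      exact hαsum.tsum_eq
    have hx1 : xcurve (3 * cF c) = s := by
      have h := xcurve_cF c 1
      rw [pow_one] at h
      rw [h, tsum_congr (fun k => by rw [hc1 k])]
      exact hβsum.tsum_eq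
    show Fin.cons (xcurve (cF c)) (sfill q (xcurve (3 * cF c))) = v
    rw [hx0, hx1, hsf]
    exact Fin.cons_self_tail v



/-- number of points handled by block `m` -/
def nn (m : ℕ) : ℕ := m.unpair.1 + 2
/-- scale handled by block `m` -/
def NN (m : ℕ) : ℕ := m.unpair.2 + 1

lemma nn_ge (m : ℕ) : 2 ≤ nn m := Nat.le_add_left 2 _
lemma NN_ge (m : ℕ) : 1 ≤ NN m := Nat.le_add_left 1 _
lemma NN_pos_real (m : ℕ) : (0:ℝ) < NN m := by
  have := NN_ge m; positivity

instance (m : ℕ) : NeZero (nn m) := ⟨by have := nn_ge m; omega⟩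

/-- tent function: 0 off `[0,1]`, equal to 1 on `[1/4,3/4]` -/
def tent (u : ℝ) : ℝ := clamp01 (min (4*u) (4*(1-u)))
/-- ramp function mapping `[1/4,3/4]` onto `[0,1]` -/
def ramp (u : ℝ) : ℝ := clamp01 (2*u - 1/2)

lemma tent_nonneg (u : ℝ) : 0 ≤ tent u := clamp01_nonneg _
lemma tent_le_one (u : ℝ) : tent u ≤ 1 := clamp01_le_one _
lemma tent_continuous : Continuous tent :=
  clamp01_continuous.comp ((continuous_const.mul continuous_id).min
    (continuous_const.mul (continuous_const.sub continuous_id)))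
lemma ramp_continuous : Continuous ramp :=
  clamp01_continuous.comp ((continuous_const.mul continuous_id).sub continuous_const)

lemma tent_of_nonpos {u : ℝ} (h : u ≤ 0) : tent u = 0 :=
  clamp01_of_nonpos ((min_le_left _ _).trans (by linarith))
lemma tent_of_one_le {u : ℝ} (h : 1 ≤ u) : tent u = 0 :=
  clamp01_of_nonpos ((min_le_right _ _).trans (by linarith))
lemma tent_eq_one {u : ℝ} (h1 : 1/4 ≤ u) (h2 : u ≤ 3/4) : tent u = 1 :=
  clamp01_of_one_le (le_min (by linarith) (by linarith))
lemma ramp_at {s : ℝ} (hs : s ∈ Icc (0:ℝ) 1) : ramp (1/4 + s/2) = s := by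
  unfold ramp
  rw [show 2*(1/4 + s/2) - 1/2 = s by ring]
  exact clamp01_of_mem hs.1 hs.2

/-- the block coordinate functions -/
def blockF (m j : ℕ) (t : ℝ) : ℝ :=
  if h : j < nn m then
    tent (t - m) * (NN m * sfill (nn m) (ramp (t - m)) ⟨j, h⟩)
  else 0

lemma blockF_continuous (m j : ℕ) : Continuous (blockF m j) := by
  unfold blockF
  split_ifs with h
  · apply Continuous.mul
    · exact tent_continuous.comp (continuous_id.sub continuous_const)
    · exact continuous_const.mul ((sfill_continuous (nn m) ⟨j, h⟩).comp
        (ramp_continuous.comp (continuous_id.sub continuous_const)))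
  · exact continuous_const

lemma blockF_nonneg (m j : ℕ) (t : ℝ) : 0 ≤ blockF m j t := by
  unfold blockF
  split_ifs with h
  · apply mul_nonneg (tent_nonneg _)
    exact mul_nonneg (NN_pos_real m).le (sfill_mem _ _ _).1
  · exact le_rfl

lemma blockF_le (m j : ℕ) (t : ℝ) : blockF m j t ≤ NN m := by
  unfold blockF
  split_ifs with h
  · calc tent (t - m) * (NN m * sfill (nn m) (ramp (t - m)) ⟨j, h⟩)
        ≤ 1 * (NN m * 1) := by
          apply mul_le_mul (tent_le_one _) ?_ ?_ zero_le_one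
          · exact mul_le_mul_of_nonneg_left (sfill_mem _ _ _).2 (NN_pos_real m).le
          · exact mul_nonneg (NN_pos_real m).le (sfill_mem _ _ _).1
      _ = NN m := by ring
  · exact (NN_pos_real m).le

lemma blockF_support {m j : ℕ} {t : ℝ} (h : t ≤ m ∨ (m:ℝ) + 1 ≤ t) :
    blockF m j t = 0 := by
  unfold blockF
  split_ifs with hj
  · rcases h with h | h
    · rw [tent_of_nonpos (by linarith), zero_mul]
    · rw [tent_of_one_le (by linarith), zero_mul]
  · rfl

lemma blockF_at (m : ℕ) {s : ℝ} (hs : s ∈ Icc (0:ℝ) 1) (j : Fin (nn m)) :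
    blockF m j.1 ((m:ℝ) + 1/4 + s/2) = NN m * sfill (nn m) s j := by
  unfold blockF
  rw [dif_pos j.2]
  have harg : (m:ℝ) + 1/4 + s/2 - m = 1/4 + s/2 := by ring
  rw [harg, tent_eq_one (by linarith [hs.1]) (by linarith [hs.2]), ramp_at hs, one_mul]

lemma blockF_le_floor (m j : ℕ) (t : ℝ) : blockF m j t ≤ NN (Nat.floor t) := by
  by_cases hmem : (m:ℝ) < t ∧ t < (m:ℝ) + 1
  · have ht0 : (0:ℝ) ≤ t := le_trans (by positivity) hmem.1.le
    have : Nat.floor t = m := by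
      rw [Nat.floor_eq_iff ht0]
      exact ⟨hmem.1.le, by exact_mod_cast hmem.2⟩
    rw [this]
    exact blockF_le m j t
  · have : blockF m j t = 0 := by
      apply blockF_support
      rcases not_and_or.1 hmem with h | h <;> push_neg at h
      · exact Or.inl h
      · exact Or.inr h
    rw [this]
    exact (NN_pos_real _).le

/-- weights for the slow strictly monotone coordinate -/
def wt (m : ℕ) : ℝ := 1 / (2 ^ m * NN m)

lemma wt_pos (m : ℕ) : 0 < wt m := by
  have := NN_pos_real m
  unfold wt; positivity
lemma wt_le_half_pow (m : ℕ) : wt m ≤ (1/2) ^ m := by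
  rw [half_pow]
  unfold wt
  apply div_le_div_of_nonneg_left one_pos.le (by positivity)
  calc (2:ℝ)^m = 2^m * 1 := by ring
    _ ≤ 2^m * NN m := by
        apply mul_le_mul_of_nonneg_left ?_ (by positivity)
        exact_mod_cast NN_ge m
lemma wt_le_inv_NN (m : ℕ) : wt m ≤ 1 / NN m := by
  unfold wt
  apply div_le_div_of_nonneg_left one_pos.le (NN_pos_real m)
  calc (NN m : ℝ) = 1 * NN m := by ring
    _ ≤ 2^m * NN m := by
        apply mul_le_mul_of_nonneg_right ?_ (NN_pos_real m).le
        exact one_le_pow₀ (by norm_num)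

/-- the slow strictly monotone coordinate -/
def gfun (t : ℝ) : ℝ := min t 0 + ∑' m : ℕ, clamp01 (t - m) * wt m

lemma summable_gterm (t : ℝ) : Summable (fun m : ℕ => clamp01 (t - m) * wt m) := by
  refine Summable.of_nonneg_of_le
    (fun m => mul_nonneg (clamp01_nonneg _) (wt_pos m).le)
    (fun m => ?_)
    (summable_geometric_of_lt_one (r := 1/2) (by norm_num) (by norm_num))
  calc clamp01 (t - m) * wt m ≤ 1 * wt m :=
        mul_le_mul_of_nonneg_right (clamp01_le_one _) (wt_pos m).le
    _ = wt m := one_mul _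
    _ ≤ (1/2)^m := wt_le_half_pow m

lemma gfun_continuous : Continuous gfun := by
  apply (continuous_id.min continuous_const).add
  apply continuous_tsum (f := fun (m : ℕ) (t : ℝ) => clamp01 (t - m) * wt m)
    (u := fun m : ℕ => (1/2:ℝ)^m) ?_
    (summable_geometric_of_lt_one (by norm_num : (0:ℝ) ≤ 1/2) (by norm_num)) ?_
  · intro m
    exact (clamp01_continuous.comp (continuous_id.sub continuous_const)).mul continuous_const
  · intro m t
    rw [Real.norm_eq_abs, abs_of_nonneg (mul_nonneg (clamp01_nonneg _) (wt_pos m).le)]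
    calc clamp01 (t - m) * wt m ≤ 1 * wt m :=
          mul_le_mul_of_nonneg_right (clamp01_le_one _) (wt_pos m).le
      _ = wt m := one_mul _
      _ ≤ (1/2)^m := wt_le_half_pow m

lemma gfun_strictMono : StrictMono gfun := by
  intro a b hab
  have hterm : ∀ m : ℕ, clamp01 (a - m) * wt m ≤ clamp01 (b - m) * wt m :=
    fun m => mul_le_mul_of_nonneg_right (clamp01_mono (by linarith)) (wt_pos m).le
  have hsum_le : ∑' m : ℕ, clamp01 (a - m) * wt m ≤ ∑' m : ℕ, clamp01 (b - m) * wt m :=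
    Summable.tsum_le_tsum hterm (summable_gterm a) (summable_gterm b)
  rcases le_or_gt b 0 with hb | hb
  · have h1 : min a 0 = a := min_eq_left (by linarith)
    have h2 : min b 0 = b := min_eq_left hb
    unfold gfun
    rw [h1, h2]
    exact add_lt_add_of_lt_of_le hab hsum_le
  rcases le_or_gt 0 a with ha | ha
  · -- strict inequality in the sum at m = ⌊a⌋₊
    set m := Nat.floor a with hm
    have hm1 : (m:ℝ) ≤ a := Nat.floor_le ha
    have hm2 : a - m < 1 := by
      have := Nat.lt_floor_add_one a
      simp only [← hm] at this
      linarith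
    have hstrict : clamp01 (a - m) * wt m < clamp01 (b - m) * wt m := by
      apply mul_lt_mul_of_pos_right ?_ (wt_pos m)
      rw [clamp01_of_mem (by linarith) (by linarith)]
      rcases le_or_gt (b - m) 1 with hbm | hbm
      · rw [clamp01_of_mem (by linarith) hbm]; linarith
      · rw [clamp01_of_one_le hbm.le]; linarith
    have hsum_lt : ∑' k : ℕ, clamp01 (a - k) * wt k < ∑' k : ℕ, clamp01 (b - k) * wt k :=
      Summable.tsum_lt_tsum hterm hstrict (summable_gterm a) (summable_gterm b)
    unfold gfun
    have : min a 0 ≤ min b 0 := min_le_min hab.le le_rfl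
    exact add_lt_add_of_le_of_lt this hsum_lt
  · have h1 : min a 0 = a := min_eq_left ha.le
    have h2 : min b 0 = 0 := min_eq_right hb.le
    unfold gfun
    rw [h1, h2]
    exact add_lt_add_of_lt_of_le (by linarith) hsum_le

lemma gfun_block (m : ℕ) {a b : ℝ} (ha : a ∈ Icc (m:ℝ) (m+1)) (hb : b ∈ Icc (m:ℝ) (m+1)) :
    |gfun a - gfun b| ≤ 1 / NN m := by
  have hm0 : (0:ℝ) ≤ m := by positivity
  have hmin : ∀ {c : ℝ}, c ∈ Icc (m:ℝ) (m+1) → min c 0 = 0 :=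
    fun hc => min_eq_right (le_trans hm0 hc.1)
  have hterm_eq : ∀ m' : ℕ, m' ≠ m → clamp01 (a - m') * wt m' = clamp01 (b - m') * wt m' := by
    intro m' hm'
    rcases lt_or_gt_of_ne hm' with h | h
    · -- m' < m : both arguments ≥ 1
      have h1 : (m':ℝ) + 1 ≤ m := by exact_mod_cast h
      rw [clamp01_of_one_le (by linarith [ha.1]), clamp01_of_one_le (by linarith [hb.1])]
    · -- m' > m : both arguments ≤ 0
      have h1 : (m:ℝ) + 1 ≤ m' := by exact_mod_cast h
      rw [clamp01_of_nonpos (by linarith [ha.2]), clamp01_of_nonpos (by linarith [hb.2])]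
  have hdiff : gfun a - gfun b =
      ∑' m' : ℕ, (clamp01 (a - m') * wt m' - clamp01 (b - m') * wt m') := by
    unfold gfun
    rw [hmin ha, hmin hb, Summable.tsum_sub (summable_gterm a) (summable_gterm b)]
    ring
  rw [hdiff, tsum_eq_single m (fun m' hm' => by rw [hterm_eq m' hm', sub_self])]
  rw [← sub_mul, abs_mul, abs_of_nonneg (wt_pos m).le]
  calc |clamp01 (a - m) - clamp01 (b - m)| * wt m ≤ 1 * wt m := by
        apply mul_le_mul_of_nonneg_right ?_ (wt_pos m).le
        rw [abs_le]
        constructor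
        · linarith [clamp01_nonneg (a - (m:ℝ)), clamp01_le_one (b - (m:ℝ))]
        · linarith [clamp01_nonneg (b - (m:ℝ)), clamp01_le_one (a - (m:ℝ))]
    _ = wt m := one_mul _
    _ ≤ 1 / NN m := wt_le_inv_NN m

/-- the universal distance function -/
def dX (x y : ℝ) : ℝ :=
  max |gfun x - gfun y| (⨆ mj : ℕ × ℕ, |blockF mj.1 mj.2 x - blockF mj.1 mj.2 y|)

lemma dX_bdd (x y : ℝ) :
    BddAbove (Set.range fun mj : ℕ × ℕ => |blockF mj.1 mj.2 x - blockF mj.1 mj.2 y|) := by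
  refine ⟨(NN (Nat.floor x) : ℝ) + NN (Nat.floor y), ?_⟩
  rintro _ ⟨⟨m, j⟩, rfl⟩
  calc |blockF m j x - blockF m j y| ≤ |blockF m j x| + |blockF m j y| := abs_sub _ _
    _ = blockF m j x + blockF m j y := by
        rw [abs_of_nonneg (blockF_nonneg m j x), abs_of_nonneg (blockF_nonneg m j y)]
    _ ≤ NN (Nat.floor x) + NN (Nat.floor y) :=
        add_le_add (blockF_le_floor m j x) (blockF_le_floor m j y)

lemma dX_self (x : ℝ) : dX x x = 0 := by
  unfold dX
  simp [ciSup_const]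

lemma dX_comm (x y : ℝ) : dX x y = dX y x := by
  unfold dX
  rw [abs_sub_comm]
  congr 1
  apply iSup_congr
  intro mj
  rw [abs_sub_comm]

lemma dX_nonneg (x y : ℝ) : 0 ≤ dX x y :=
  le_trans (abs_nonneg _) (le_max_left _ _)

lemma dX_ge_g (x y : ℝ) : |gfun x - gfun y| ≤ dX x y := le_max_left _ _

lemma dX_ge_block (x y : ℝ) (mj : ℕ × ℕ) :
    |blockF mj.1 mj.2 x - blockF mj.1 mj.2 y| ≤ dX x y :=
  (le_ciSup (dX_bdd x y) mj).trans (le_max_right _ _)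

lemma dX_triangle (x y z : ℝ) : dX x z ≤ dX x y + dX y z := by
  unfold dX
  apply max_le
  · calc |gfun x - gfun z| ≤ |gfun x - gfun y| + |gfun y - gfun z| := abs_sub_le _ _ _
      _ ≤ dX x y + dX y z := add_le_add (dX_ge_g x y) (dX_ge_g y z)
  · apply ciSup_le
    intro mj
    calc |blockF mj.1 mj.2 x - blockF mj.1 mj.2 z|
        ≤ |blockF mj.1 mj.2 x - blockF mj.1 mj.2 y| + |blockF mj.1 mj.2 y - blockF mj.1 mj.2 z| :=
          abs_sub_le _ _ _
      _ ≤ dX x y + dX y z := add_le_add (dX_ge_block x y mj) (dX_ge_block y z mj)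

lemma dX_eq_zero {x y : ℝ} (h : dX x y = 0) : x = y := by
  have hg : |gfun x - gfun y| ≤ 0 := h ▸ dX_ge_g x y
  have : gfun x = gfun y := by
    have := abs_nonneg (gfun x - gfun y)
    have : |gfun x - gfun y| = 0 := le_antisymm hg this
    have := abs_eq_zero.1 this
    linarith
  exact gfun_strictMono.injective this

lemma dX_cont_at (x : ℝ) {ε : ℝ} (hε : 0 < ε) :
    ∃ δ > 0, ∀ y, |y - x| < δ → dX x y < ε := by
  classical
  set P : ℕ := Nat.floor (max x 0) + 2 with hP
  have hPbig : ∀ m : ℕ, P ≤ m → x + 1 ≤ m := by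
    intro m hm
    have h1 : max x 0 < Nat.floor (max x 0) + 1 := Nat.lt_floor_add_one _
    have h2 : x ≤ max x 0 := le_max_left _ _
    have h3 : (P:ℝ) ≤ m := Nat.cast_le.2 hm
    rw [hP] at h3
    push_cast at h3
    linarith
  set J : ℕ := (Finset.range P).sup nn with hJ
  set R : Finset (ℕ × ℕ) := Finset.range P ×ˢ Finset.range J with hR
  set h : ℝ → ℝ := fun y => ∑ mj ∈ R, |blockF mj.1 mj.2 x - blockF mj.1 mj.2 y| with hh
  have hcont : Continuous h := by
    apply continuous_finset_sum
    intro mj _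
    exact (continuous_const.sub (blockF_continuous mj.1 mj.2)).abs
  have hx0 : h x = 0 := by
    rw [hh]
    simp
  obtain ⟨δ₂, hδ₂, hd2⟩ := Metric.continuous_iff.1 hcont x ε hε
  obtain ⟨δ₁, hδ₁, hd1⟩ := Metric.continuous_iff.1 gfun_continuous x ε hε
  refine ⟨min 1 (min δ₁ δ₂), by positivity, ?_⟩
  intro y hy
  have hy1 : |y - x| < 1 := lt_of_lt_of_le hy (min_le_left _ _)
  have hyδ₁ : |y - x| < δ₁ := lt_of_lt_of_le hy ((min_le_right _ _).trans (min_le_left _ _))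
  have hyδ₂ : |y - x| < δ₂ := lt_of_lt_of_le hy ((min_le_right _ _).trans (min_le_right _ _))
  unfold dX
  apply max_lt
  · have := hd1 y (by rwa [Real.dist_eq])
    rw [Real.dist_eq] at this
    rwa [abs_sub_comm]
  · have hhy : h y < ε := by
      have := hd2 y (by rwa [Real.dist_eq])
      rw [Real.dist_eq, hx0, sub_zero] at this
      calc h y ≤ |h y| := le_abs_self _
        _ < ε := this
    apply lt_of_le_of_lt _ hhy
    apply ciSup_le
    rintro ⟨m, j⟩
    by_cases hmem : (m, j) ∈ R
    · exact Finset.single_le_sum (f := fun mj : ℕ × ℕ => |blockF mj.1 mj.2 x - blockF mj.1 mj.2 y|)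
        (fun mj _ => abs_nonneg _) hmem
    · have hzero : blockF m j x = 0 ∧ blockF m j y = 0 := by
        by_cases hmP : m < P
        · -- then j ≥ J ≥ nn m
          have hjJ : ¬ j < J := by
            intro hjJ
            exact hmem (Finset.mem_product.2 ⟨Finset.mem_range.2 hmP, Finset.mem_range.2 hjJ⟩)
          have hnnm : nn m ≤ J := Finset.le_sup (Finset.mem_range.2 hmP)
          have hj : ¬ j < nn m := by omega
          constructor <;> · unfold blockF; rw [dif_neg hj]
        · push_neg at hmP
          have hxm : x + 1 ≤ m := hPbig m hmP
          have hym : y ≤ (m:ℝ) := by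
            have := abs_lt.1 hy1
            linarith
          exact ⟨blockF_support (Or.inl (by linarith)), blockF_support (Or.inl hym)⟩
      rw [hzero.1, hzero.2, sub_zero, abs_zero]
      exact Finset.sum_nonneg (fun mj _ => abs_nonneg _)

lemma isOpen_iff_dX (s : Set ℝ) :
    IsOpen s ↔ ∀ x ∈ s, ∃ ε > 0, ∀ y, dX x y < ε → y ∈ s := by
  constructor
  · intro hs x hx
    obtain ⟨ε, hε, hball⟩ := Metric.isOpen_iff.1 hs x hx
    refine ⟨min (gfun (x + ε) - gfun x) (gfun x - gfun (x - ε)), ?_, ?_⟩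
    · apply lt_min
      · have := gfun_strictMono (lt_add_of_pos_right x hε); linarith
      · have := gfun_strictMono (sub_lt_self x hε); linarith
    · intro y hy
      apply hball
      rw [Metric.mem_ball, Real.dist_eq]
      have hg : |gfun x - gfun y| < min (gfun (x + ε) - gfun x) (gfun x - gfun (x - ε)) :=
        lt_of_le_of_lt (dX_ge_g x y) hy
      by_contra hcon
      push_neg at hcon
      rcases le_abs.1 hcon with h | h
      · -- ε ≤ y - x, so y ≥ x + ε
        have h1 : gfun (x + ε) ≤ gfun y := gfun_strictMono.monotone (by linarith)
        have h2 : gfun y - gfun x ≤ |gfun x - gfun y| := by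
          rw [abs_sub_comm]; exact le_abs_self _
        have h3 := (min_le_left (gfun (x + ε) - gfun x) (gfun x - gfun (x - ε)))
        linarith
      · -- ε ≤ x - y, so y ≤ x - ε
        have h1 : gfun y ≤ gfun (x - ε) := gfun_strictMono.monotone (by linarith)
        have h2 : gfun x - gfun y ≤ |gfun x - gfun y| := le_abs_self _
        have h3 := (min_le_right (gfun (x + ε) - gfun x) (gfun x - gfun (x - ε)))
        linarith
  · intro H
    rw [Metric.isOpen_iff]
    intro x hx
    obtain ⟨ε, hε, hball⟩ := H x hx
    obtain ⟨δ, hδ, hd⟩ := dX_cont_at x hε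
    exact ⟨δ, hδ, fun y hy => hball y (hd y (by rwa [Metric.mem_ball, Real.dist_eq] at hy))⟩


lemma blockF_zero_of_ge {m j : ℕ} (h : ¬ j < nn m) (t : ℝ) : blockF m j t = 0 := by
  unfold blockF
  rw [dif_neg h]


/-- the universal metric space structure on ℝ -/
def univMS : MetricSpace ℝ :=
  MetricSpace.ofDistTopology dX dX_self dX_comm dX_triangle isOpen_iff_dX
    (fun _ _ h => dX_eq_zero h)

/-- There exists a metric on ℝ inducing the standard topology such that every
finite metric space embeds isometrically into ℝ with this metric. -/
theorem universal_metric_on_real :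
    ∃ m : MetricSpace ℝ,
      m.toUniformSpace.toTopologicalSpace = (inferInstance : TopologicalSpace ℝ) ∧
      ∀ (X : Type) [MetricSpace X] [Finite X],
        ∃ g : X → ℝ, ∀ x x' : X, m.dist (g x) (g x') = dist x x' := by
  classical
  refine ⟨univMS, rfl, ?_⟩
  intro X _ _
  by_cases hX : Subsingleton X
  · refine ⟨fun _ => 0, fun x x' => ?_⟩
    rw [Subsingleton.elim x x']
    show dX 0 0 = dist x' x'
    rw [dX_self, dist_self]
  · have hnt : Nontrivial X := not_subsingleton_iff_nontrivial.1 hX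
    have : Fintype X := Fintype.ofFinite X
    set n := Fintype.card X with hn
    have hn2 : 2 ≤ n := Fintype.one_lt_card
    set e : X ≃ Fin n := Fintype.equivFin X with he
    set s : Finset (X × X) := Finset.univ.filter (fun p => p.1 ≠ p.2) with hs
    have hsne : s.Nonempty := by
      obtain ⟨a, b, hab⟩ := exists_pair_ne X
      exact ⟨(a, b), by simp [hs, hab]⟩
    set Δ : ℝ := s.sup' hsne (fun p => dist p.1 p.2) with hΔ
    set δ : ℝ := s.inf' hsne (fun p => dist p.1 p.2) with hδ
    have hδpos : 0 < δ := by
      rw [hδ, Finset.lt_inf'_iff]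
      rintro ⟨a, b⟩ hab
      rw [hs, Finset.mem_filter] at hab
      exact dist_pos.2 hab.2
    set N : ℕ := Nat.ceil Δ + Nat.ceil (1/δ) + 1 with hN
    have hN1 : 1 ≤ N := by omega
    have hNr : (0:ℝ) < N := by
      have : (1:ℝ) ≤ N := by exact_mod_cast hN1
      linarith
    have hΔN : Δ ≤ N := by
      have h1 : Δ ≤ (Nat.ceil Δ : ℝ) := Nat.le_ceil Δ
      have h2 : (Nat.ceil Δ : ℝ) ≤ N := by
        rw [hN]; push_cast; linarith [show (0:ℝ) ≤ (Nat.ceil (1/δ) : ℝ) by positivity]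
      linarith
    have hδN : 1/(N:ℝ) ≤ δ := by
      have h1 : 1/δ ≤ (Nat.ceil (1/δ) : ℝ) := Nat.le_ceil _
      have h2 : (Nat.ceil (1/δ) : ℝ) ≤ N := by
        rw [hN]; push_cast; linarith [show (0:ℝ) ≤ (Nat.ceil Δ : ℝ) by positivity]
      have h3 : 1/δ ≤ (N:ℝ) := le_trans h1 h2
      rw [div_le_iff₀ hNr]
      calc (1:ℝ) = δ * (1/δ) := by field_simp
        _ ≤ δ * N := mul_le_mul_of_nonneg_left h3 hδpos.le
    set m : ℕ := Nat.pair (n - 2) (N - 1) with hm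
    have hnn : nn m = n := by
      rw [nn, hm, Nat.unpair_pair]; omega
    have hNN : NN m = N := by
      rw [NN, hm, Nat.unpair_pair]; omega
    set κ : Fin (nn m) ≃ X := (finCongr hnn).trans e.symm with hκ
    set V : X → Fin (nn m) → ℝ := fun x j => dist x (κ j) / N with hV
    have hVmem : ∀ x j, V x j ∈ Icc (0:ℝ) 1 := by
      intro x j
      constructor
      · exact div_nonneg dist_nonneg hNr.le
      · rw [div_le_one hNr]
        rcases eq_or_ne x (κ j) with h | h
        · rw [h, dist_self]; linarith
        · have : dist x (κ j) ≤ Δ :=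
            Finset.le_sup' (f := fun p : X × X => dist p.1 p.2) (b := (x, κ j))
              (by rw [hs, Finset.mem_filter]; exact ⟨Finset.mem_univ _, h⟩)
          linarith
    have hts := fun x => sfill_surj (nn m) (V x) (hVmem x)
    choose t ht hsf using hts
    set T : X → ℝ := fun x => (m:ℝ) + 1/4 + t x / 2 with hT
    have hTmem : ∀ x, T x ∈ Icc (m:ℝ) (m+1) := by
      intro x
      constructor
      · have := (ht x).1; rw [hT]; simp only []; linarith
      · have := (ht x).2; rw [hT]; simp only []; linarith
    have hblockT : ∀ (x : X) (j : Fin (nn m)), blockF m j.1 (T x) = dist x (κ j) := by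
      intro x j
      rw [hT]
      simp only []
      rw [blockF_at m (ht x) j, hsf x, hV]
      simp only []
      rw [hNN]
      field_simp
    refine ⟨T, ?_⟩
    intro x x'
    show dX (T x) (T x') = dist x x'
    rcases eq_or_ne x x' with rfl | hne
    · rw [dX_self, dist_self]
    · have hpair : (x, x') ∈ s := by
        rw [hs, Finset.mem_filter]; exact ⟨Finset.mem_univ _, hne⟩
      have hDδ : δ ≤ dist x x' := Finset.inf'_le _ hpair
      have hD : 1/(N:ℝ) ≤ dist x x' := le_trans hδN hDδ
      apply le_antisymm
      · apply max_le
        · calc |gfun (T x) - gfun (T x')| ≤ 1 / NN m :=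
                gfun_block m (hTmem x) (hTmem x')
            _ = 1 / N := by rw [hNN]
            _ ≤ dist x x' := hD
        · apply ciSup_le
          rintro ⟨m', j'⟩
          rcases eq_or_ne m' m with rfl | hm'
          · by_cases hj' : j' < nn m
            · rw [hblockT x ⟨j', hj'⟩, hblockT x' ⟨j', hj'⟩]
              exact abs_dist_sub_le x x' (κ ⟨j', hj'⟩)
            · rw [blockF_zero_of_ge hj', blockF_zero_of_ge hj', sub_self, abs_zero]
              exact dist_nonneg
          · have hz : ∀ z : X, blockF m' j' (T z) = 0 := by
              intro z
              apply blockF_support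
              rcases lt_or_gt_of_ne hm' with h | h
              · right
                have h1 : (m' : ℝ) + 1 ≤ m := by exact_mod_cast h
                have := (hTmem z).1
                linarith
              · left
                have h1 : (m : ℝ) + 1 ≤ m' := by exact_mod_cast h
                have := (hTmem z).2
                linarith
            rw [hz x, hz x', sub_self, abs_zero]
            exact dist_nonneg
      · apply le_trans _ (le_max_right _ _)
        have hle := le_ciSup (dX_bdd (T x) (T x')) (m, (κ.symm x' : Fin (nn m)).1)
        apply le_trans _ hle
        have hj := (κ.symm x').2
        rw [hblockT x ⟨(κ.symm x').1, hj⟩, hblockT x' ⟨(κ.symm x').1, hj⟩]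
        have hκx' : κ ⟨(κ.symm x').1, hj⟩ = x' := by
          rw [Fin.eta]
          exact κ.apply_symm_apply x'
        rw [hκx', dist_self, sub_zero, abs_of_nonneg dist_nonneg]


end UnivMetricConstruction
end

section
/- For every natural number n ≥ 1 there exists a metric d_n on the interval J_n = [n − 1, n] that induces the standard topology on J_n and is such that every finite subset Z of the cube Iⁿ = [0, n]ⁿ (with the sup metric D(x̄, ȳ) = max_{1 ≤ i ≤ n} |x_i − y_i|) which is (1/n)-dispersed admits an isometric embedding of (Z, D) into (J_n, d_n). -/
/-!
Pick a continuous map `Φ : Jₙ → ℝⁿ` whose image contains the cube `Iⁿ` (a space-filling curve,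
here obtained by Tietze-extending a surjection from the Cantor set onto `Iⁿ`), and put
`dₙ(s, t) = max (|s - t| / n) (D (Φ s) (Φ t))` on `Jₙ`, the metric pulled back along the
embedding `s ↦ (s / n, Φ s)`. Sending each point of `Z` to a `Φ`-preimage is then isometric,
because `|s - t| / n ≤ 1 / n ≤ D (Φ s) (Φ t)` for distinct points of a `(1/n)`-dispersed set.
-/

open Set Topology

theorem dist_pi_eq_iSup {ι : Type*} [Fintype ι] {X : ι → Type*} [∀ i, PseudoMetricSpace (X i)]
    (f g : ∀ i, X i) : dist f g = ⨆ i, dist (f i) (g i) :=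
  le_antisymm
    ((dist_pi_le_iff (Real.iSup_nonneg fun _ => dist_nonneg)).2 fun i =>
      le_ciSup (f := fun i => dist (f i) (g i)) (Finite.bddAbove_range _) i)
    (Real.iSup_le (dist_le_pi_dist f g) dist_nonneg)

theorem exists_continuous_image_unitInterval_superset {E : Type*} [MetricSpace E]
    [TietzeExtension.{0} E] {K : Set E} (hK : IsCompact K) (hne : K.Nonempty) :
    ∃ F : C(ℝ, E), K ⊆ F '' Icc 0 1 := by
  have : CompactSpace K := isCompact_iff_compactSpace.mp hK
  have : Nonempty K := hne.to_subtype
  obtain ⟨p, hp, hp_surj⟩ := exists_nat_bool_continuous_surjective_of_compact K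
  let q : C(cantorSet, E) :=
    ⟨fun t => p (cantorSetHomeomorphNatToBool t), by fun_prop⟩
  obtain ⟨F, hF⟩ := q.exists_restrict_eq isClosed_cantorSet
  refine ⟨F, fun x hx => ?_⟩
  obtain ⟨c, hc⟩ := hp_surj ⟨x, hx⟩
  set t := cantorSetHomeomorphNatToBool.symm c
  refine ⟨t, cantorSet_subset_unitInterval t.2, ?_⟩
  have hFt : F t = q t := congrArg (· t) hF
  simp [hFt, q, t, hc]

theorem exists_continuous_image_Icc_superset {E : Type*} [MetricSpace E]
    [TietzeExtension.{0} E] {K : Set E} (hK : IsCompact K) (hne : K.Nonempty) {a b : ℝ}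
    (hab : a < b) : ∃ Φ : ℝ → E, Continuous Φ ∧ K ⊆ Φ '' Icc a b := by
  obtain ⟨F, hF⟩ := exists_continuous_image_unitInterval_superset hK hne
  have hba : 0 < b - a := sub_pos.2 hab
  refine ⟨fun s => F ((s - a) / (b - a)), by fun_prop, fun x hx => ?_⟩
  obtain ⟨t, ⟨ht0, ht1⟩, rfl⟩ := hF hx
  refine ⟨a + t * (b - a), ⟨by nlinarith, by nlinarith⟩, ?_⟩
  simp only [add_sub_cancel_left, mul_div_cancel_right₀ _ hba.ne']

theorem Topology.IsEmbedding.exists_metricSpace_dist_eq_max {X Y Z : Type*}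
    [TopologicalSpace X] [MetricSpace Y] [MetricSpace Z] {g : X → Y} (hg : IsEmbedding g)
    {f : X → Z} (hf : Continuous f) :
    ∃ m : MetricSpace X, m.toUniformSpace.toTopologicalSpace = ‹TopologicalSpace X› ∧
      ∀ x y, m.dist x y = max (dist (g x) (g y)) (dist (f x) (f y)) :=
  let hgf : IsEmbedding fun x => (g x, f x) := .of_comp (hg.continuous.prodMk hf) continuous_fst hg
  ⟨hgf.comapMetricSpace _, rfl, fun _ _ => Prod.dist_eq⟩

/-- For every `n ≥ 1` there is a metric on `Jₙ = [n - 1, n]` inducing the standard topology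
such that every finite `(1/n)`-dispersed subset `Z` of the cube `Iⁿ = [0, n]ⁿ` (with the sup
metric `D(x̄, ȳ) = max_i |xᵢ - yᵢ|`) embeds isometrically into `Jₙ` with this metric. -/
theorem universal_metric_on_Jn (n : ℕ) (hn : 1 ≤ n) :
    ∃ m : MetricSpace (Set.Icc ((n : ℝ) - 1) (n : ℝ)),
      m.toUniformSpace.toTopologicalSpace
        = (inferInstance : TopologicalSpace (Set.Icc ((n : ℝ) - 1) (n : ℝ))) ∧
      ∀ Z : Set (Fin n → ℝ), Z.Finite →
        (∀ z ∈ Z, ∀ i : Fin n, z i ∈ Set.Icc (0 : ℝ) n) →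
        (∀ z ∈ Z, ∀ z' ∈ Z, z ≠ z' → (1 : ℝ) / n ≤ ⨆ i : Fin n, |z i - z' i|) →
        ∃ g : Z → Set.Icc ((n : ℝ) - 1) (n : ℝ),
          ∀ z z' : Z,
            m.dist (g z) (g z') = ⨆ i : Fin n, |(z : Fin n → ℝ) i - (z' : Fin n → ℝ) i| := by
  have hn0 : (0 : ℝ) < n := by exact_mod_cast hn
  have hcube_compact : IsCompact (univ.pi fun _ : Fin n => Icc 0 (n : ℝ)) :=
    isCompact_univ_pi fun _ => isCompact_Icc
  obtain ⟨Φ, hΦ, hcube⟩ := exists_continuous_image_Icc_superset hcube_compact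
    ⟨0, fun _ _ => ⟨le_rfl, hn0.le⟩⟩ (sub_one_lt (n : ℝ))
  have hscale : IsEmbedding fun s : Icc ((n : ℝ) - 1) n => (s : ℝ) / n :=
    (Continuous.isClosedEmbedding (by fun_prop)
      fun s t hst => Subtype.ext ((div_left_inj' hn0.ne').1 hst)).isEmbedding
  obtain ⟨m, hm_top, hm_dist⟩ :=
    hscale.exists_metricSpace_dist_eq_max (hΦ.comp continuous_subtype_val)
  refine ⟨m, hm_top, fun Z _ hZ_cube hZ_disp => ?_⟩
  choose s hs hΦs using fun z : Z => hcube fun i _ => hZ_cube z z.2 i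
  refine ⟨fun z => ⟨s z, hs z⟩, fun z z' => ?_⟩
  have hD : ∀ z z' : Z,
      ⨆ i, |(z : Fin n → ℝ) i - (z' : Fin n → ℝ) i| = dist (z : Fin n → ℝ) z' :=
    fun z z' => by simp_rw [dist_pi_eq_iSup, Real.dist_eq]
  rw [hD, hm_dist, Function.comp_apply, Function.comp_apply, hΦs, hΦs]
  refine max_eq_right ?_
  rcases eq_or_ne z z' with rfl | hne
  · simp
  calc dist (s z / n) (s z' / n) = dist (s z) (s z') / n := by
        rw [Real.dist_eq, Real.dist_eq, ← sub_div, abs_div, abs_of_pos hn0]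
    _ ≤ (n - (n - 1)) / n := by gcongr; exact Real.dist_le_of_mem_Icc (hs z) (hs z')
    _ = 1 / n := by ring
    _ ≤ dist (z : Fin n → ℝ) z' := hD z z' ▸ hZ_disp z z.2 z' z'.2 (Subtype.coe_injective.ne hne)
end

section
/- For every finite metric space (X, d) there exist a natural number n ≥ 1 and a metric d_n on the interval [n − 1, n] inducing the standard topology on [n − 1, n], such that (X, d) admits an isometric embedding into ([n − 1, n], d_n). -/
/-!
Put the points of `X` at distinct positions `p x` of the interval, so close together that
`|p x - p y| ≤ d(x, y)`. By Tietze, the Fréchet embedding `x ↦ d(x, ·)` of `X` into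
`(X → ℝ, sup)` extends along `p` to a continuous `g` on the interval. Pulling back the max
metric of `[0, 1] × (X → ℝ)` along the graph `a ↦ (a, g a)` gives a metric with the standard topology,
in which `p x` and `p y` are at distance `max |p x - p y| (d(x, y)) = d(x, y)`.
-/

open Topology

theorem isometry_dist_pi {X : Type*} [PseudoMetricSpace X] [Fintype X] :
    Isometry fun x y : X ↦ dist x y :=
  Isometry.of_dist_eq fun x x' ↦ le_antisymm
    ((dist_pi_le_iff dist_nonneg).2 fun y ↦ abs_dist_sub_le x x' y)
    (by simpa using dist_le_pi_dist (fun y ↦ dist x y) (fun y ↦ dist x' y) x')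

section

variable {X : Type*} [MetricSpace X]

theorem Finite.exists_pos_forall_le_dist [Finite X] :
    ∃ ε > 0, Pairwise fun x y : X ↦ ε ≤ dist x y := by
  rcases isEmpty_or_nonempty {q : X × X // q.1 ≠ q.2} with h | h
  · exact ⟨1, one_pos, fun x y hxy ↦ (h.false ⟨(x, y), hxy⟩).elim⟩
  · obtain ⟨q₀, hq₀⟩ := Finite.exists_min fun q : {q : X × X // q.1 ≠ q.2} ↦ dist q.1.1 q.1.2
    exact ⟨_, dist_pos.2 q₀.2, fun x y hxy ↦ hq₀ ⟨(x, y), hxy⟩⟩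

theorem exists_injective_lipschitzWith_one_Icc [Finite X] {a b : ℝ} (hab : a < b) :
    ∃ p : X → Set.Icc a b, Function.Injective p ∧ LipschitzWith 1 p := by
  obtain ⟨ε, hε, hε_le⟩ := Finite.exists_pos_forall_le_dist (X := X)
  set δ := min ε (b - a)
  have hδ : a < a + δ := lt_add_of_pos_right a (lt_min hε (sub_pos.2 hab))
  have : Infinite (Set.Icc a (a + δ)) := (Set.Icc_infinite hδ).to_subtype
  obtain ⟨q, hq⟩ := exists_injective_nat X
  have hsub : Set.Icc a (a + δ) ⊆ Set.Icc a b :=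
    Set.Icc_subset_Icc_right (by linarith [min_le_right ε (b - a)])
  let p := Set.inclusion hsub ∘ Infinite.natEmbedding (Set.Icc a (a + δ)) ∘ q
  refine ⟨p, (Set.inclusion_injective _).comp ((Infinite.natEmbedding _).injective.comp hq),
    LipschitzWith.of_dist_le_mul fun x y ↦ ?_⟩
  rcases eq_or_ne x y with rfl | hxy
  · simp
  calc dist (p x) (p y) ≤ a + δ - a := Real.dist_le_of_mem_Icc
        (Infinite.natEmbedding (Set.Icc a (a + δ)) (q x)).2
        (Infinite.natEmbedding (Set.Icc a (a + δ)) (q y)).2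
    _ ≤ ε := by linarith [min_le_left ε (b - a)]
    _ ≤ 1 * dist x y := by rw [one_mul]; exact hε_le hxy

theorem exists_isEmbedding_isometry_comp_of_injective_lipschitzWith_one {α : Type*}
    [MetricSpace α] [Fintype X] {p : X → α} (hp : Function.Injective p)
    (hp_lip : LipschitzWith 1 p) :
    ∃ φ : α → α × (X → ℝ), IsEmbedding φ ∧ Isometry (φ ∘ p) := by
  obtain ⟨g, hg⟩ := ContinuousMap.exists_extension
    (continuous_of_discreteTopology.isClosedEmbedding hp)
    ⟨fun x y : X ↦ dist x y, continuous_of_discreteTopology⟩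
  have hgp : Isometry (g ∘ p) := by
    rw [show ⇑g ∘ p = fun x y ↦ dist x y from congr(⇑$hg)]
    exact isometry_dist_pi
  refine ⟨fun a ↦ (a, g a), isEmbedding_graph g.continuous, .of_dist_eq fun x y ↦ ?_⟩
  change max (dist (p x) (p y)) (dist ((g ∘ p) x) ((g ∘ p) y)) = dist x y
  rw [hgp.dist_eq]
  exact max_eq_right (by simpa using hp_lip.dist_le_mul x y)

end

/-- Every finite metric space embeds isometrically into some interval `[n - 1, n]`
equipped with a metric inducing the standard topology. -/
theorem finite_metric_embeds_in_interval (X : Type*) [MetricSpace X] [Finite X] :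
    ∃ n : ℕ, 1 ≤ n ∧
      ∃ m : MetricSpace (Set.Icc ((n : ℝ) - 1) (n : ℝ)),
        m.toUniformSpace.toTopologicalSpace
          = (inferInstance : TopologicalSpace (Set.Icc ((n : ℝ) - 1) (n : ℝ))) ∧
        ∃ g : X → Set.Icc ((n : ℝ) - 1) (n : ℝ),
          ∀ x x' : X, m.dist (g x) (g x') = dist x x' := by
  have := Fintype.ofFinite X
  refine ⟨1, le_rfl, ?_⟩
  obtain ⟨p, hp, hp_lip⟩ := exists_injective_lipschitzWith_one_Icc (X := X) (sub_one_lt _)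
  obtain ⟨φ, hφ, hφp⟩ := exists_isEmbedding_isometry_comp_of_injective_lipschitzWith_one hp hp_lip
  exact ⟨hφ.comapMetricSpace φ, rfl, p, hφp.dist_eq⟩
end
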